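/- Let s be an s-number. Then the sequence of right convergents (R_n(s))_{n≥0} is strictly decreasing and bounded from below: R_{n+1}(s) < R_n(s) for all n ∈ ℕ, and R_n(s) > L_0(s) for all n ∈ ℕ, where L_0(s) = (a_{0,s}+b_{0,s})/(c_{0,s}+d_{0,s}). -/

import Mathlib

/-!
Write `g_n = ((a, b), (c, d))`. Since `g_{n+1} = g_n V(s_{n+1})` and `det g_n = 1`, cross-multiplying
gives `R_n - R_{n+1} = 1 / (c_n c_{n+1})`, `L_{n+1} - L_n = (s_{n+1} - 2) / ((c_n + d_n)(c_{n+1} + d_{n+1}))`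
and `R_n - L_n = 1 / (c_n (c_n + d_n))`. The denominators `c_n` and `c_n + d_n` stay positive because
`s_{n+1} ≥ 2`, so `R` strictly decreases, `L` increases, and `R_n > L_n ≥ L_0`.
-/

/-- The 2×2 integer matrix V(m) = ((m, -1), (1, 0)). -/
def V (m : ℤ) : Matrix (Fin 2) (Fin 2) ℤ := !![m, -1; 1, 0]

/-- The matrix g_{n,s} = V(s 0) · V(s 1) ··· V(s n). -/
def gMat (s : ℕ → ℤ) (n : ℕ) : Matrix (Fin 2) (Fin 2) ℤ :=
  ((List.range (n + 1)).map fun i => V (s i)).prod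

/-- The n-th right convergent R_n(s) = a_{n,s} / c_{n,s} as a real number. -/
noncomputable def R (s : ℕ → ℤ) (n : ℕ) : ℝ :=
  (gMat s n 0 0 : ℝ) / (gMat s n 1 0 : ℝ)

/-- The n-th left convergent L_n(s) = (a_{n,s}+b_{n,s})/(c_{n,s}+d_{n,s}) as a real number. -/
noncomputable def L (s : ℕ → ℤ) (n : ℕ) : ℝ :=
  ((gMat s n 0 0 : ℝ) + (gMat s n 0 1 : ℝ)) / ((gMat s n 1 0 : ℝ) + (gMat s n 1 1 : ℝ))

open Matrix

lemma gMat_zero (s : ℕ → ℤ) : gMat s 0 = V (s 0) := by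
  simp [gMat]

lemma gMat_succ (s : ℕ → ℤ) (n : ℕ) : gMat s (n + 1) = gMat s n * V (s (n + 1)) := by
  simp [gMat, List.range_succ, mul_assoc]

lemma det_V (m : ℤ) : (V m).det = 1 := by
  simp [V, det_fin_two_of]

lemma det_gMat (s : ℕ → ℤ) (n : ℕ) : (gMat s n).det = 1 := by
  induction n with
  | zero => rw [gMat_zero, det_V]
  | succ n ih => rw [gMat_succ, det_mul, ih, det_V, one_mul]

section MulV

variable (g : Matrix (Fin 2) (Fin 2) ℤ) (m : ℤ)

lemma mul_V : g * V m = !![g 0 0 * m + g 0 1, -g 0 0; g 1 0 * m + g 1 1, -g 1 0] := by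
  ext i j
  fin_cases i <;> fin_cases j <;> simp [V, mul_apply]

lemma mul_V_cross_right :
    (g * V m) 0 0 * g 1 0 - g 0 0 * (g * V m) 1 0 = -g.det := by
  rw [mul_V, det_fin_two]
  simp only [of_apply, cons_val', cons_val_zero, cons_val_one, empty_val', cons_val_fin_one]
  ring

lemma mul_V_cross_left :
    ((g * V m) 0 0 + (g * V m) 0 1) * (g 1 0 + g 1 1)
      - (g 0 0 + g 0 1) * ((g * V m) 1 0 + (g * V m) 1 1) = (m - 2) * g.det := by
  rw [mul_V, det_fin_two]
  simp only [of_apply, cons_val', cons_val_zero, cons_val_one, empty_val', cons_val_fin_one]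
  ring

lemma mul_V_denominators_pos (hm : 2 ≤ m) (hc : 0 < g 1 0) (hcd : 0 < g 1 0 + g 1 1) :
    0 < (g * V m) 1 0 ∧ 0 < (g * V m) 1 0 + (g * V m) 1 1 := by
  rw [mul_V]
  simp only [of_apply, cons_val', cons_val_zero, cons_val_one, empty_val', cons_val_fin_one]
  constructor <;> nlinarith

end MulV

lemma cross_left_right (g : Matrix (Fin 2) (Fin 2) ℤ) :
    g 0 0 * (g 1 0 + g 1 1) - (g 0 0 + g 0 1) * g 1 0 = g.det := by
  rw [det_fin_two]
  ring

section SNumber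

variable {s : ℕ → ℤ} (hs : ∀ n : ℕ, 1 ≤ n → 2 ≤ s n)
include hs

lemma gMat_denominators_pos (n : ℕ) :
    0 < gMat s n 1 0 ∧ 0 < gMat s n 1 0 + gMat s n 1 1 := by
  induction n with
  | zero => simp [gMat_zero, V]
  | succ n ih =>
    rw [gMat_succ]
    exact mul_V_denominators_pos _ _ (hs (n + 1) n.succ_pos) ih.1 ih.2

lemma R_succ_lt (n : ℕ) : R s (n + 1) < R s n := by
  have hc := fun k => (gMat_denominators_pos hs k).1
  rw [R, R, div_lt_div_iff₀ (by exact_mod_cast hc (n + 1)) (by exact_mod_cast hc n)]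
  have key := mul_V_cross_right (gMat s n) (s (n + 1))
  rw [← gMat_succ, det_gMat] at key
  exact_mod_cast (by omega : gMat s (n + 1) 0 0 * gMat s n 1 0 < gMat s n 0 0 * gMat s (n + 1) 1 0)

lemma L_le_succ (n : ℕ) : L s n ≤ L s (n + 1) := by
  have hcd := fun k => (gMat_denominators_pos hs k).2
  rw [L, L, div_le_div_iff₀ (by exact_mod_cast hcd n) (by exact_mod_cast hcd (n + 1))]
  have key := mul_V_cross_left (gMat s n) (s (n + 1))
  rw [← gMat_succ, det_gMat] at key
  have hm := hs (n + 1) n.succ_pos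
  exact_mod_cast (by omega : (gMat s n 0 0 + gMat s n 0 1) * (gMat s (n + 1) 1 0 + gMat s (n + 1) 1 1)
    ≤ (gMat s (n + 1) 0 0 + gMat s (n + 1) 0 1) * (gMat s n 1 0 + gMat s n 1 1))

lemma L_lt_R (n : ℕ) : L s n < R s n := by
  obtain ⟨hc, hcd⟩ := gMat_denominators_pos hs n
  rw [L, R, div_lt_div_iff₀ (by exact_mod_cast hcd) (by exact_mod_cast hc)]
  have key := cross_left_right (gMat s n)
  rw [det_gMat] at key
  exact_mod_cast (by omega : (gMat s n 0 0 + gMat s n 0 1) * gMat s n 1 0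
    < gMat s n 0 0 * (gMat s n 1 0 + gMat s n 1 1))

end SNumber

/-- For an s-number s, the sequence of right convergents is strictly
decreasing and bounded from below by L_0(s). -/
theorem stmt_6 (s : ℕ → ℤ) (hs : ∀ n : ℕ, 1 ≤ n → 2 ≤ s n) :
    (∀ n : ℕ, R s (n + 1) < R s n) ∧ (∀ n : ℕ, L s 0 < R s n) := by
  have hL : Monotone (L s) := monotone_nat_of_le_succ (L_le_succ hs)
  exact ⟨R_succ_lt hs, fun n => (hL n.zero_le).trans_lt (L_lt_R hs n)⟩
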